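/- Suppose ⟨u, μ, C⟩ and ⟨u', μ', C'⟩ both represent the same preference ≿ on acts via V(f) = E_μ[u∘f] − C(σ(f)), where u, u' are affine with range ℝ, μ, μ' have full support, and C, C' are monotone with value 0 on the trivial algebra. Then μ = μ', u' = βu + γ for some β > 0, γ ∈ ℝ, and C' = βC. -/
import Mathlib


/-- The algebra on `Ω` generated by the level sets of an act `f : Ω → X`. -/
def sigmaAct {Ω X : Type*} (f : Ω → X) : MeasurableSpace Ω :=
  MeasurableSpace.comap f ⊤

section Aux
variable {Ω X : Type*}

variable {Ω X : Type*}

lemma sigmaAct_const (x : X) : sigmaAct (fun _ : Ω => x) = ⊥ := by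
  apply le_antisymm _ bot_le
  rintro s ⟨t, -, rfl⟩
  rw [MeasurableSpace.measurableSet_bot_iff]
  by_cases hx : x ∈ t
  · right; ext ω; simp [hx]
  · left; ext ω; simp [hx]

lemma sigmaAct_equiv_comp (e : X ≃ X) (f : Ω → X) :
    sigmaAct (⇑e ∘ f) = sigmaAct f := by
  apply le_antisymm
  · rintro s ⟨t, -, rfl⟩
    exact ⟨e ⁻¹' t, trivial, rfl⟩
  · rintro s ⟨t, -, rfl⟩
    refine ⟨e '' t, trivial, ?_⟩
    ext ω; simp

lemma exists_act [Fintype Ω] (m : MeasurableSpace Ω)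
    (v : ℕ → X) (hv : Function.Injective v) :
    ∃ f : Ω → X, sigmaAct f = m := by
  classical
  set R : Ω → Ω → Prop := fun ω ω' => ∀ s : Set Ω, @MeasurableSet Ω m s → (ω ∈ s ↔ ω' ∈ s) with hR
  have hrefl : ∀ ω, R ω ω := fun _ _ _ => Iff.rfl
  have hsymm : ∀ {ω ω'}, R ω ω' → R ω' ω := fun h s hs => (h s hs).symm
  have htrans : ∀ {a b c}, R a b → R b c → R a c := fun h h' s hs => (h s hs).trans (h' s hs)
  let S : Setoid Ω := ⟨R, ⟨hrefl, @hsymm, @htrans⟩⟩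
  haveI : DecidableEq (Quotient S) := Classical.decEq _
  let e := Fintype.equivFin (Quotient S)
  let f : Ω → X := fun ω => v (e ⟦ω⟧)
  have hf : ∀ ω ω', f ω = f ω' ↔ R ω ω' := by
    intro ω ω'
    constructor
    · intro h
      have h2 : (⟦ω⟧ : Quotient S) = ⟦ω'⟧ := e.injective (Fin.val_injective (hv h))
      exact Quotient.eq''.mp h2
    · intro h
      have : (⟦ω⟧ : Quotient S) = ⟦ω'⟧ := Quotient.sound h
      simp only [f, this]
  have hatom : ∀ ω : Ω, @MeasurableSet Ω m {ω' | R ω ω'} := by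
    intro ω
    have : {ω' | R ω ω'} = ⋂ s ∈ {s : Set Ω | @MeasurableSet Ω m s ∧ ω ∈ s}, s := by
      ext ω'
      simp only [Set.mem_setOf_eq, Set.mem_iInter]
      constructor
      · intro h s ⟨hs, hωs⟩
        exact (h s hs).mp hωs
      · intro h s hs
        constructor
        · intro hωs
          exact h s ⟨hs, hωs⟩
        · intro hω's
          by_contra hωs
          exact (h sᶜ ⟨hs.compl, hωs⟩) hω's
    rw [this]
    exact MeasurableSet.biInter (Set.to_countable _) (fun s hs => hs.1)
  refine ⟨f, le_antisymm ?_ ?_⟩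
  · rintro s ⟨t, -, rfl⟩
    have : f ⁻¹' t = ⋃ ω ∈ {ω | f ω ∈ t}, {ω' | R ω ω'} := by
      ext x
      simp only [Set.mem_preimage, Set.mem_iUnion, Set.mem_setOf_eq]
      constructor
      · intro h
        exact ⟨x, h, hrefl x⟩
      · rintro ⟨ω, hω, hRωx⟩
        rwa [← (hf ω x).mpr hRωx]
    rw [this]
    exact MeasurableSet.biUnion (Set.to_countable _) (fun ω _ => hatom ω)
  · intro s hs
    refine ⟨f '' s, trivial, ?_⟩
    ext x
    simp only [Set.mem_preimage, Set.mem_image]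
    constructor
    · rintro ⟨ω, hωs, hfeq⟩
      exact (((hf ω x).mp hfeq) s hs).mp hωs
    · intro hx
      exact ⟨x, hx, rfl⟩

end Aux

/-- Uniqueness of the Complexity Aversion representation: if `⟨u, μ, C⟩` and
`⟨u', μ', C'⟩` represent the same preference, then `μ = μ'`, `u' = βu + γ`
with `β > 0`, and `C' = βC`. -/
theorem stmt4 {Ω X : Type*} [Fintype Ω] [Nonempty Ω] [AddCommGroup X] [Module ℝ X]
    (μ μ' : Ω → ℝ) (hμ : ∀ ω, 0 < μ ω) (hμ' : ∀ ω, 0 < μ' ω)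
    (hμ1 : ∑ ω, μ ω = 1) (hμ'1 : ∑ ω, μ' ω = 1)
    (u u' : X → ℝ)
    (haff : ∀ (a b : X) (t : ℝ), u (t • a + (1 - t) • b) = t * u a + (1 - t) * u b)
    (haff' : ∀ (a b : X) (t : ℝ), u' (t • a + (1 - t) • b) = t * u' a + (1 - t) * u' b)
    (hsurj : Function.Surjective u) (hsurj' : Function.Surjective u')
    (C C' : MeasurableSpace Ω → ℝ)
    (hCmono : Monotone C) (hC'mono : Monotone C')
    (hC0 : C ⊥ = 0) (hC'0 : C' ⊥ = 0)
    (hCnn : ∀ m, 0 ≤ C m) (hC'nn : ∀ m, 0 ≤ C' m)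
    (hrep : ∀ f g : Ω → X,
      ((∑ ω, u (g ω) * μ ω) - C (sigmaAct g) ≤ (∑ ω, u (f ω) * μ ω) - C (sigmaAct f)) ↔
      ((∑ ω, u' (g ω) * μ' ω) - C' (sigmaAct g) ≤ (∑ ω, u' (f ω) * μ' ω) - C' (sigmaAct f))) :
    μ = μ' ∧ ∃ β γ : ℝ, 0 < β ∧ (∀ x, u' x = β * u x + γ) ∧
      (∀ m : MeasurableSpace Ω, C' m = β * C m) := by
  classical
  -- constant acts
  have hsum : ∀ z : X, ∑ ω, u ((fun _ : Ω => z) ω) * μ ω = u z := by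
    intro z
    rw [← Finset.mul_sum, hμ1, mul_one]
  have hsum' : ∀ z : X, ∑ ω, u' ((fun _ : Ω => z) ω) * μ' ω = u' z := by
    intro z
    rw [← Finset.mul_sum, hμ'1, mul_one]
  have hconst : ∀ y z : X, (u z ≤ u y ↔ u' z ≤ u' y) := by
    intro y z
    have h := hrep (fun _ : Ω => y) (fun _ : Ω => z)
    rwa [hsum, hsum, hsum', hsum', sigmaAct_const, sigmaAct_const, hC0, hC'0, sub_zero,
      sub_zero, sub_zero, sub_zero] at h
  -- points a b with u a = 1, u b = 0
  obtain ⟨a, hua⟩ := hsurj 1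
  obtain ⟨b, hub⟩ := hsurj 0
  set x : ℝ → X := fun t => t • a + (1 - t) • b with hx
  have hux : ∀ t, u (x t) = t := by
    intro t; rw [hx]; simp only; rw [haff, hua, hub]; ring
  set β : ℝ := u' a - u' b with hβdef
  set γ : ℝ := u' b with hγdef
  have hu'x : ∀ t, u' (x t) = β * t + γ := by
    intro t; rw [hx]; simp only; rw [haff']; rw [hβdef, hγdef]; ring
  have hu' : ∀ z, u' z = β * u z + γ := by
    intro z
    have h1 : u' (x (u z)) = u' z := by
      have ha := (hconst z (x (u z))).mp (by rw [hux])
      have hb := (hconst (x (u z)) z).mp (by rw [hux])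
      linarith
    rw [← h1, hu'x]
  have hβ : 0 < β := by
    have h1 : u' b ≤ u' a := (hconst a b).mp (by rw [hua, hub]; norm_num)
    have h2 : ¬ u' a ≤ u' b := by
      intro h
      have := (hconst b a).mpr h
      rw [hua, hub] at this
      linarith
    rw [hβdef]
    rcases lt_or_ge (u' b) (u' a) with h | h
    · linarith
    · exact absurd h h2
  -- V' f = β V f + γ
  have hVcmp : ∀ f : Ω → X,
      (∑ ω, u' (f ω) * μ' ω) - C' (sigmaAct f)
        = β * ((∑ ω, u (f ω) * μ ω) - C (sigmaAct f)) + γ := by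
    intro f
    set Vf := (∑ ω, u (f ω) * μ ω) - C (sigmaAct f) with hVf
    set Vf' := (∑ ω, u' (f ω) * μ' ω) - C' (sigmaAct f) with hVf'
    have key : ∀ c : ℝ, c ≤ Vf ↔ β * c + γ ≤ Vf' := by
      intro c
      have h := hrep f (fun _ : Ω => x c)
      rwa [hsum, hsum', sigmaAct_const, hC0, hC'0, sub_zero, sub_zero, hux, hu'x] at h
    have h1 : β * Vf + γ ≤ Vf' := (key Vf).mp le_rfl
    have h2 : (Vf' - γ) / β ≤ Vf := by
      apply (key _).mpr
      rw [mul_div_cancel₀ _ (ne_of_gt hβ)]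
      linarith
    have h3 : Vf' - γ ≤ β * Vf := by
      rw [div_le_iff₀ hβ] at h2
      linarith [h2]
    linarith
  -- the starred identity
  have hstar : ∀ f : Ω → X,
      β * (∑ ω, u (f ω) * μ' ω) - C' (sigmaAct f)
        = β * (∑ ω, u (f ω) * μ ω) - β * C (sigmaAct f) := by
    intro f
    have h := hVcmp f
    have hl : ∑ ω, u' (f ω) * μ' ω = β * (∑ ω, u (f ω) * μ' ω) + γ := by
      have : ∀ ω : Ω, u' (f ω) * μ' ω = β * (u (f ω) * μ' ω) + γ * μ' ω := by
        intro ω; rw [hu' (f ω)]; ring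
      rw [Finset.sum_congr rfl (fun ω _ => this ω), Finset.sum_add_distrib,
        ← Finset.mul_sum, ← Finset.mul_sum, hμ'1, mul_one]
    rw [hl] at h
    linarith
  -- μ = μ'
  have hμeq : μ = μ' := by
    funext ω₀
    set f : Ω → X := fun ω => if ω = ω₀ then a else b with hfdef
    set g : Ω → X := fun ω => if ω = ω₀ then b else a with hgdef
    have hσ : sigmaAct g = sigmaAct f := by
      have : g = ⇑(Equiv.swap a b) ∘ f := by
        funext ω
        by_cases hω : ω = ω₀ <;> simp [hfdef, hgdef, hω, Equiv.swap_apply_left,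
          Equiv.swap_apply_right]
      rw [this, sigmaAct_equiv_comp]
    have hsf : ∀ ν : Ω → ℝ, (∑ ω, ν ω = 1) → ∑ ω, u (f ω) * ν ω = ν ω₀ := by
      intro ν hν
      have : ∀ ω : Ω, u (f ω) * ν ω = if ω = ω₀ then ν ω else 0 := by
        intro ω
        by_cases hω : ω = ω₀ <;> simp [hfdef, hω, hua, hub]
      rw [Finset.sum_congr rfl (fun ω _ => this ω), Finset.sum_ite_eq' Finset.univ ω₀ ν]
      simp
    have hsg : ∀ ν : Ω → ℝ, (∑ ω, ν ω = 1) → ∑ ω, u (g ω) * ν ω = 1 - ν ω₀ := by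
      intro ν hν
      have : ∀ ω : Ω, u (g ω) * ν ω = ν ω - (if ω = ω₀ then ν ω else 0) := by
        intro ω
        by_cases hω : ω = ω₀ <;> simp [hgdef, hω, hua, hub]
      rw [Finset.sum_congr rfl (fun ω _ => this ω), Finset.sum_sub_distrib, hν,
        Finset.sum_ite_eq' Finset.univ ω₀ ν]
      simp
    have h1 := hstar f
    have h2 := hstar g
    rw [hσ] at h2
    rw [hsf μ hμ1, hsf μ' hμ'1] at h1
    rw [hsg μ hμ1, hsg μ' hμ'1] at h2
    have : β * μ ω₀ = β * μ' ω₀ := by linarith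
    exact mul_left_cancel₀ (ne_of_gt hβ) this
  refine ⟨hμeq, β, γ, hβ, hu', ?_⟩
  intro m
  set v : ℕ → X := fun n => Classical.choose (hsurj n) with hv
  have hvspec : ∀ n : ℕ, u (v n) = n := fun n => Classical.choose_spec (hsurj n)
  have hvinj : Function.Injective v := by
    intro n k h
    have : (n : ℝ) = k := by rw [← hvspec n, ← hvspec k, h]
    exact_mod_cast this
  obtain ⟨f, hf⟩ := exists_act m v hvinj
  have h := hstar f
  rw [hf, ← hμeq] at h
  have : C' m = β * C m := by linarith
  exact this
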